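/- For every integer k ≥ 1, 1/(12(k+1)^2) ≤ V_n ≤ 1/(12 k^2) whenever 3k ≤ n < 3(k+1), where V_n = (1/36)(1/(n_1-1)^2 + 1/(n_2-1)^2 + 1/(n_3-1)^2) with n_1, n_2, n_3 as determined by n mod 3 in the equilateral-triangle conditional quantization (n=3k: all three equal k; n=3k+1: values k+1,k,k; n=3k+2: values k+1,k+1,k). -/
import Mathlib


open Filter Real

/-- The `n`th conditional unconstrained quantization error for the uniform distribution on
the boundary of the unit equilateral triangle with the three vertices as conditional set:
`V n = (1/36)(1/(n₁-1)² + 1/(n₂-1)² + 1/(n₃-1)²)` where, writing `n = 3k + r` with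
`r = n % 3`, the numbers `nⱼ - 1` are `k,k,k` if `r = 0`; `k+1,k,k` if `r = 1`;
and `k+1,k+1,k` if `r = 2`. -/
noncomputable def triV (n : ℕ) : ℝ :=
  (1/36) * (1 / ((n / 3 + (if 1 ≤ n % 3 then 1 else 0) : ℕ) : ℝ)^2
          + 1 / ((n / 3 + (if 2 ≤ n % 3 then 1 else 0) : ℕ) : ℝ)^2
          + 1 / ((n / 3 : ℕ) : ℝ)^2)

/-- Sandwich estimate: for `k ≥ 1` and `3k ≤ n < 3(k+1)`,
`1/(12(k+1)²) ≤ V_n ≤ 1/(12k²)`. -/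
theorem stmt12 (k n : ℕ) (hk : 1 ≤ k) (h₁ : 3 * k ≤ n) (h₂ : n < 3 * (k + 1)) :
    1 / (12 * ((k : ℝ) + 1)^2) ≤ triV n ∧ triV n ≤ 1 / (12 * (k : ℝ)^2) := by
  have hd : n / 3 = k := by omega
  have hk0 : (0:ℝ) < (k:ℝ) := by exact_mod_cast hk
  have hk1 : (0:ℝ) < (k:ℝ) + 1 := by linarith
  have hr : n % 3 = 0 ∨ n % 3 = 1 ∨ n % 3 = 2 := by omega
  have hka : ((k:ℝ))^2 ≠ 0 := by positivity
  have hkb : ((k:ℝ)+1)^2 ≠ 0 := by positivity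
  have hba : (((k:ℝ)+1)^2)⁻¹ ≤ ((k:ℝ)^2)⁻¹ := by
    apply inv_anti₀ (by positivity)
    nlinarith
  have hbpos : (0:ℝ) < (((k:ℝ)+1)^2)⁻¹ := by positivity
  rcases hr with hr | hr | hr <;>
    simp only [triV, hd, hr] <;> norm_num <;> push_cast <;> constructor <;> linarith
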